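/- arXiv:2211.16442 — 3 statements merged into one kernel-verified Lean document; each statement's English description precedes it below -/
import Mathlib

section
/- Let q(λ) = aλ² + bλ + c be a univariate quadratic function and let u, ℓ ∈ ℝ. Let q̲ and q̄ be the minimum and maximum values attained by q on the three points u, ℓ, and (u+ℓ)/2. Then q̄ − q̲ ≥ |a|(u−ℓ)²/4. -/
/-! The second difference `q u + q ℓ - 2 q ((u + ℓ) / 2)` of a quadratic equals `a (u - ℓ)² / 2`,
and both `(q u + q ℓ) / 2` and `q ((u + ℓ) / 2)` lie between the minimum and maximum of the three
values, so their distance, `|a| (u - ℓ)² / 4`, is at most `q̄ - q̲`. -/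

theorem abs_average_sub_le_max_sub_min (x y z : ℝ) :
    |(x + y) / 2 - z| ≤ max (max x y) z - min (min x y) z := by
  have hx := (min_le_left (min x y) z).trans (min_le_left x y)
  have hy := (min_le_left (min x y) z).trans (min_le_right x y)
  have hx' := (le_max_left x y).trans (le_max_left (max x y) z)
  have hy' := (le_max_right x y).trans (le_max_left (max x y) z)
  exact abs_sub_le_of_le_of_le (by linarith) (by linarith) (min_le_right _ _) (le_max_right _ _)

theorem stmt_0 (a b c u ℓ : ℝ) (q : ℝ → ℝ)
    (hq : ∀ lam : ℝ, q lam = a * lam ^ 2 + b * lam + c) :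
    max (max (q u) (q ℓ)) (q ((u + ℓ) / 2)) - min (min (q u) (q ℓ)) (q ((u + ℓ) / 2))
      ≥ |a| * (u - ℓ) ^ 2 / 4 := by
  have hgap : (q u + q ℓ) / 2 - q ((u + ℓ) / 2) = a * (u - ℓ) ^ 2 / 4 := by
    rw [hq, hq, hq]; ring
  calc |a| * (u - ℓ) ^ 2 / 4 = |(q u + q ℓ) / 2 - q ((u + ℓ) / 2)| := by
        rw [hgap, abs_div, abs_mul, abs_of_nonneg (sq_nonneg (u - ℓ))]; norm_num
    _ ≤ _ := abs_average_sub_le_max_sub_min _ _ _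
end

section
/- Let f : ℝ^d × ℝ^(n−d) → ℝ be f(y,z) = yᵀDy + cᵀy + lᵀz where D is diagonal with |D₁₁| maximal among diagonal entries. Suppose (y⁺,z⁺) and (y⁻,z⁻) satisfy y⁺₁ − y⁻₁ ≥ 1 and ∑_{i=2}^d (y⁺ᵢ − y⁻ᵢ)² ≤ 1/4. Then the maximum minus the minimum of f over the three points (y⁺,z⁺), (y⁻,z⁻), and their midpoint is at least (3/16)·|D₁₁|. -/
/-!
The affine part of `f` cancels in the second difference `(f⁺ + f⁻) / 2 - f(midpoint)`, which equals
`¼ ∑ Dᵢᵢ (y⁺ᵢ - y⁻ᵢ)²`. In this sum the first coordinate contributes at least `|D₁₁| / 4` and,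
since `|D₁₁|` dominates, the others at most `|D₁₁| / 16` in absolute value. Finally
`|(a + b) / 2 - m|` never exceeds the spread `max - min` of three numbers `a, b, m`.
-/

open Finset

theorem abs_midpoint_sub_le_max_sub_min {𝕜 : Type*} [Field 𝕜] [LinearOrder 𝕜]
    [IsStrictOrderedRing 𝕜] (a b m : 𝕜) :
    |(a + b) / 2 - m| ≤ max (max a b) m - min (min a b) m := by
  rw [abs_sub_le_iff]
  constructor <;> linarith [le_max_left (max a b) m, le_max_right (max a b) m, le_max_left a b,
    le_max_right a b, min_le_left (min a b) m, min_le_right (min a b) m, min_le_left a b,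
    min_le_right a b]

theorem quadratic_midpoint_defect {ι κ : Type*} [Fintype ι] [Fintype κ]
    (q c : ι → ℝ) (l : κ → ℝ) (f : (ι → ℝ) → (κ → ℝ) → ℝ)
    (hf : ∀ y z, f y z = (∑ i, q i * y i ^ 2) + (∑ i, c i * y i) + (∑ j, l j * z j))
    (y y' : ι → ℝ) (z z' : κ → ℝ) :
    (f y z + f y' z') / 2 - f ((y + y') / 2) ((z + z') / 2)
      = (∑ i, q i * (y i - y' i) ^ 2) / 4 := by
  have hq : ∀ i, q i * ((y i + y' i) / 2) ^ 2
      = (q i * y i ^ 2 + q i * y' i ^ 2) / 2 - q i * (y i - y' i) ^ 2 / 4 := fun i => by ring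
  have hc : ∀ i, c i * ((y i + y' i) / 2) = (c i * y i + c i * y' i) / 2 := fun i => by ring
  have hl : ∀ j, l j * ((z j + z' j) / 2) = (l j * z j + l j * z' j) / 2 := fun j => by ring
  simp only [hf, Pi.div_apply, Pi.add_apply, Pi.ofNat_apply, hq, hc, hl, sum_sub_distrib,
    ← sum_div, sum_add_distrib]
  ring

theorem abs_sum_mul_sq_ge {ι R : Type*} [Fintype ι] [DecidableEq ι] [CommRing R] [LinearOrder R]
    [IsStrictOrderedRing R] (q v : ι → R) (i₀ : ι) (hq : ∀ i, |q i| ≤ |q i₀|) :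
    |q i₀| * (v i₀ ^ 2 - ∑ i ∈ univ.erase i₀, v i ^ 2) ≤ |∑ i, q i * v i ^ 2| := by
  have htail : |∑ i ∈ univ.erase i₀, q i * v i ^ 2| ≤ |q i₀| * ∑ i ∈ univ.erase i₀, v i ^ 2 :=
    calc |∑ i ∈ univ.erase i₀, q i * v i ^ 2|
        ≤ ∑ i ∈ univ.erase i₀, |q i| * v i ^ 2 := by
          refine (abs_sum_le_sum_abs _ _).trans_eq (sum_congr rfl fun i _ => ?_)
          rw [abs_mul, abs_sq]
      _ ≤ |q i₀| * ∑ i ∈ univ.erase i₀, v i ^ 2 := by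
          rw [mul_sum]
          exact sum_le_sum fun i _ => mul_le_mul_of_nonneg_right (hq i) (sq_nonneg _)
  have hhead := abs_sub_abs_le_abs_sub (q i₀ * v i₀ ^ 2) (-∑ i ∈ univ.erase i₀, q i * v i ^ 2)
  rw [sub_neg_eq_add, abs_neg, abs_mul, abs_sq] at hhead
  rw [← add_sum_erase _ _ (mem_univ i₀)]
  linarith

theorem stmt_5_general (d m : ℕ) (hd : 0 < d) (D : Matrix (Fin d) (Fin d) ℝ)
    (hmax : ∀ i : Fin d, |D i i| ≤ |D ⟨0, hd⟩ ⟨0, hd⟩|)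
    (c : Fin d → ℝ) (l : Fin m → ℝ)
    (f : (Fin d → ℝ) → (Fin m → ℝ) → ℝ)
    (hf : ∀ y z, f y z = (∑ i, D i i * y i ^ 2) + (∑ i, c i * y i) + (∑ j, l j * z j))
    (yp ym : Fin d → ℝ) (zp zm : Fin m → ℝ)
    (h1 : yp ⟨0, hd⟩ - ym ⟨0, hd⟩ ≥ 1)
    (hsum : ∑ i ∈ Finset.univ.erase ⟨0, hd⟩, (yp i - ym i) ^ 2 ≤ 1 / 4) :
    max (max (f yp zp) (f ym zm)) (f ((yp + ym) / 2) ((zp + zm) / 2)) -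
      min (min (f yp zp) (f ym zm)) (f ((yp + ym) / 2) ((zp + zm) / 2))
      ≥ 3 / 16 * |D ⟨0, hd⟩ ⟨0, hd⟩| := by
  set i₀ : Fin d := ⟨0, hd⟩
  have hspread := abs_midpoint_sub_le_max_sub_min (f yp zp) (f ym zm)
    (f ((yp + ym) / 2) ((zp + zm) / 2))
  rw [quadratic_midpoint_defect (fun i => D i i) c l f hf, abs_div,
    abs_of_pos (four_pos : (0 : ℝ) < 4)] at hspread
  have hlower := abs_sum_mul_sq_ge (fun i => D i i) (fun i => yp i - ym i) i₀ hmax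
  have hgap : 3 / 4 ≤ (yp i₀ - ym i₀) ^ 2 - ∑ i ∈ univ.erase i₀, (yp i - ym i) ^ 2 := by
    nlinarith
  have := mul_le_mul_of_nonneg_left hgap (abs_nonneg (D i₀ i₀))
  linarith

theorem stmt_5 (d m : ℕ) (hd : 0 < d) (D : Matrix (Fin d) (Fin d) ℝ)
    (hdiag : D.IsDiag)
    (hmax : ∀ i : Fin d, |D i i| ≤ |D ⟨0, hd⟩ ⟨0, hd⟩|)
    (c : Fin d → ℝ) (l : Fin m → ℝ)
    (f : (Fin d → ℝ) → (Fin m → ℝ) → ℝ)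
    (hf : ∀ y z, f y z = (∑ i, D i i * y i ^ 2) + (∑ i, c i * y i) + (∑ j, l j * z j))
    (yp ym : Fin d → ℝ) (zp zm : Fin m → ℝ)
    (h1 : yp ⟨0, hd⟩ - ym ⟨0, hd⟩ ≥ 1)
    (hsum : ∑ i ∈ Finset.univ.erase ⟨0, hd⟩, (yp i - ym i) ^ 2 ≤ 1 / 4) :
    max (max (f yp zp) (f ym zm)) (f ((yp + ym) / 2) ((zp + zm) / 2)) -
      min (min (f yp zp) (f ym zm)) (f ((yp + ym) / 2) ((zp + zm) / 2))
      ≥ 3 / 16 * |D ⟨0, hd⟩ ⟨0, hd⟩| :=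
  stmt_5_general d m hd D hmax c l f hf yp ym zp zm h1 hsum
end

section
/- Let H̃ be a symmetric n×n real matrix, k an index, and suppose |H̃_{rk}| = max over i,j ∈ {k,…,n} of |H̃_{ij}| for some r > k. Set γ = +1 if H̃_{rk}(H̃_{kk} + H̃_{rr}) ≥ 0 and γ = −1 otherwise, and let H̿ be obtained from H̃ by adding γ times row r to row k and γ times column r to column k. Then |H̿_{kk}| = max over i,j ∈ {k,…,n} of |H̿_{ij}|. -/
/-! The sign `γ` makes `H k k + H r r` and `2 γ H r k` agree in sign, so the new pivot
`H k k + H r r + 2 γ H r k` has absolute value at least `2 |H r k|`. Every other entry of the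
trailing block is either unchanged or the sum of two old entries of that block (one scaled by
`γ = ±1`), so it is at most `2 |H r k|` in absolute value. -/

namespace Matrix

variable {ι R : Type*} [DecidableEq ι] [CommRing R]

theorem transpose_transvection (k r : ι) (c : R) : (transvection k r c)ᵀ = transvection r k c := by
  simp [transvection]

variable [Fintype ι] (A : Matrix ι ι R) (k r : ι) (c : R)

theorem transvection_conj_apply_of_ne {i j : ι} (hi : i ≠ k) (hj : j ≠ k) :
    (transvection k r c * A * (transvection k r c)ᵀ) i j = A i j := by
  simp [transpose_transvection, hi, hj]

theorem transvection_conj_apply_row {j : ι} (hj : j ≠ k) :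
    (transvection k r c * A * (transvection k r c)ᵀ) k j = A k j + c * A r j := by
  simp [transpose_transvection, hj]

theorem transvection_conj_apply_col {i : ι} (hi : i ≠ k) :
    (transvection k r c * A * (transvection k r c)ᵀ) i k = A i k + c * A i r := by
  simp [transpose_transvection, hi]

variable {A} in
theorem transvection_conj_apply_diag (hA : A.IsSymm) :
    (transvection k r c * A * (transvection k r c)ᵀ) k k =
      A k k + c ^ 2 * A r r + 2 * c * A r k := by
  simp only [transpose_transvection, mul_assoc, transvection_mul_apply_same,
    mul_transvection_apply_same, hA.apply k r]
  ring

end Matrix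

theorem two_mul_abs_le_abs_add_two_mul {α : Type*} [CommRing α] [LinearOrder α]
    [IsStrictOrderedRing α] {a b : α} (h : 0 ≤ a * b) : 2 * |b| ≤ |a + 2 * b| := by
  rw [show (2 : α) * |b| = |2 * b| by rw [abs_mul, abs_two], ← sq_le_sq]
  nlinarith [sq_nonneg a]

theorem abs_add_mul_le_of_abs_eq_one {α : Type*} [Ring α] [LinearOrder α]
    [IsStrictOrderedRing α] {x y c : α} (hc : |c| = 1) : |x + c * y| ≤ |x| + |y| := by
  simpa [abs_mul, hc] using abs_add_le x (c * y)

theorem stmt_6 (n : ℕ) (H : Matrix (Fin n) (Fin n) ℝ) (hsym : H.IsSymm)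
    (k r : Fin n) (hkr : k < r)
    (hmax : ∀ i j : Fin n, k ≤ i → k ≤ j → |H i j| ≤ |H r k|)
    (γ : ℝ) (hγ : γ = if H r k * (H k k + H r r) ≥ 0 then (1 : ℝ) else -1)
    (P : Matrix (Fin n) (Fin n) ℝ)
    (hP : P = 1 + Matrix.single k r γ)
    (H2 : Matrix (Fin n) (Fin n) ℝ) (hH2 : H2 = P * H * P.transpose) :
    ∀ i j : Fin n, k ≤ i → k ≤ j → |H2 i j| ≤ |H2 k k| := by
  replace hP : P = Matrix.transvection k r γ := hP
  subst hP
  have hγ_abs : |γ| = 1 := by rw [hγ]; split_ifs <;> norm_num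
  have hγ_sq : γ ^ 2 = 1 := by rw [← sq_abs, hγ_abs, one_pow]
  have hsign : 0 ≤ (H k k + H r r) * (γ * H r k) := by
    rw [hγ]; split_ifs with h <;> nlinarith
  have hdiag : H2 k k = H k k + H r r + 2 * (γ * H r k) := by
    rw [hH2, Matrix.transvection_conj_apply_diag k r γ hsym, hγ_sq]
    ring
  have hpivot : 2 * |H r k| ≤ |H2 k k| := by
    simpa [hdiag, abs_mul, hγ_abs] using two_mul_abs_le_abs_add_two_mul hsign
  have hrow : ∀ j, k ≤ j → |H k j| + |H r j| ≤ 2 * |H r k| := fun j hj => by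
    linarith [hmax k j le_rfl hj, hmax r j hkr.le hj]
  have hcol : ∀ i, k ≤ i → |H i k| + |H i r| ≤ 2 * |H r k| := fun i hi => by
    linarith [hmax i k hi le_rfl, hmax i r hi hkr.le]
  intro i j hi hj
  by_cases hik : i = k <;> by_cases hjk : j = k
  · rw [hik, hjk]
  all_goals refine le_trans ?_ hpivot
  · subst hik
    rw [hH2, Matrix.transvection_conj_apply_row H i r γ hjk]
    exact (abs_add_mul_le_of_abs_eq_one hγ_abs).trans (hrow j hj)
  · subst hjk
    rw [hH2, Matrix.transvection_conj_apply_col H j r γ hik]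
    exact (abs_add_mul_le_of_abs_eq_one hγ_abs).trans (hcol i hi)
  · rw [hH2, Matrix.transvection_conj_apply_of_ne H k r γ hik hjk]
    linarith [hmax i j hi hj, abs_nonneg (H r k)]
end
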